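/- Monotonicity of UI under adversarial side information: for jointly distributed finite random variables (S,Y,Z,Z'), UI(S; Y \ (Z,Z')) ≤ UI(S; Y \ Z). -/

import Mathlib

open Finset Real

section Defs
variable {α β γ : Type*} [Fintype α] [Fintype β] [Fintype γ]

/-- `p` is a probability distribution on a finite type. -/
def IsDist (p : α → ℝ) : Prop := (∀ a, 0 ≤ p a) ∧ ∑ a, p a = 1

/-- `k` is a channel (stochastic matrix): each row is a distribution. -/
def IsChannel (k : α → β → ℝ) : Prop := ∀ a, IsDist (k a)

/-- Kullback–Leibler divergence (base 2) between distributions on a finite type. -/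
noncomputable def klDiv2 (p q : α → ℝ) : ℝ := ∑ a, p a * Real.logb 2 (p a / q a)

/-- Channel composition: `(chComp lam mu) a c = ∑ b, lam b c * mu a b`. -/
def chComp (lam : β → γ → ℝ) (mu : α → β → ℝ) : α → γ → ℝ :=
  fun a c => ∑ b, lam b c * mu a b

/-- Conditional (weighted) KL divergence `D(k ∥ k' | pi)`. -/
noncomputable def condKL (pi : α → ℝ) (k k' : α → β → ℝ) : ℝ :=
  ∑ a, pi a * klDiv2 (k a) (k' a)

/-- Weighted output deficiency `δ_o^π(μ,κ) = inf_λ D(κ ∥ λ∘μ | π)`. -/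
noncomputable def defOut (pi : α → ℝ) (mu : α → γ → ℝ) (kap : α → β → ℝ) : ℝ :=
  sInf {d | ∃ lam : γ → β → ℝ, IsChannel lam ∧ d = condKL pi kap (chComp lam mu)}

/-- Risk of a fixed strategy `rho` used after observing through channel `nu`. -/
noncomputable def riskWith {S O A : Type*} [Fintype S] [Fintype O] [Fintype A]
    (pi : S → ℝ) (nu : S → O → ℝ) (rho : O → A → ℝ) (l : S → A → ℝ) : ℝ :=
  ∑ s, pi s * ∑ a, chComp rho nu s a * l s a

/-- Optimal Bayes risk `R(π,ν,ℓ)`. -/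
noncomputable def bayesRisk {S O A : Type*} [Fintype S] [Fintype O] [Fintype A]
    (pi : S → ℝ) (nu : S → O → ℝ) (l : S → A → ℝ) : ℝ :=
  sInf {r | ∃ rho : O → A → ℝ, IsChannel rho ∧ r = riskWith pi nu rho l}

/-- Total variation distance between distributions on a finite type. -/
noncomputable def tvDist (p q : α → ℝ) : ℝ := (∑ a, |p a - q a|) / 2

end Defs

section Joint
variable {S Y Z : Type*} [Fintype S] [Fintype Y] [Fintype Z]

noncomputable def margSY (P : S × Y × Z → ℝ) : S × Y → ℝ := fun p => ∑ z, P (p.1, p.2, z)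
noncomputable def margSZ (P : S × Y × Z → ℝ) : S × Z → ℝ := fun p => ∑ y, P (p.1, y, p.2)
noncomputable def margYZ (P : S × Y × Z → ℝ) : Y × Z → ℝ := fun p => ∑ s, P (s, p.1, p.2)
noncomputable def margS (P : S × Y × Z → ℝ) : S → ℝ := fun s => ∑ y, ∑ z, P (s, y, z)
noncomputable def margY (P : S × Y × Z → ℝ) : Y → ℝ := fun y => ∑ s, ∑ z, P (s, y, z)
noncomputable def margZ (P : S × Y × Z → ℝ) : Z → ℝ := fun z => ∑ s, ∑ y, P (s, y, z)

/-- Mutual information `I(S;Y)` (base 2) of the (S,Y)-marginal of `P`. -/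
noncomputable def miSY (P : S × Y × Z → ℝ) : ℝ :=
  ∑ s, ∑ y, margSY P (s, y) * Real.logb 2 (margSY P (s, y) / (margS P s * margY P y))

/-- Mutual information `I(S;Z)` (base 2) of the (S,Z)-marginal of `P`. -/
noncomputable def miSZ (P : S × Y × Z → ℝ) : ℝ :=
  ∑ s, ∑ z, margSZ P (s, z) * Real.logb 2 (margSZ P (s, z) / (margS P s * margZ P z))

/-- Conditional mutual information `I(S;Y|Z)` (base 2) under `P`. -/
noncomputable def condMI (P : S × Y × Z → ℝ) : ℝ :=
  ∑ s, ∑ y, ∑ z,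
    P (s, y, z) * Real.logb 2 (P (s, y, z) * margZ P z / (margSZ P (s, z) * margYZ P (y, z)))

/-- The feasible set `Δ_P`: joint distributions with the same (S,Y)- and (S,Z)-marginals as `P`. -/
def marginalPolytope (P : S × Y × Z → ℝ) : Set (S × Y × Z → ℝ) :=
  {Q | IsDist Q ∧ margSY Q = margSY P ∧ margSZ Q = margSZ P}

/-- Minimum-synergy unique information `UI(S;Y\Z) = inf_{Q ∈ Δ_P} I_Q(S;Y|Z)`. -/
noncomputable def UI (P : S × Y × Z → ℝ) : ℝ :=
  sInf (condMI '' marginalPolytope P)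

noncomputable def condYgivenS (P : S × Y × Z → ℝ) : S → Y → ℝ :=
  fun s y => margSY P (s, y) / margS P s
noncomputable def condZgivenS (P : S × Y × Z → ℝ) : S → Z → ℝ :=
  fun s z => margSZ P (s, z) / margS P s
noncomputable def condSgivenY (P : S × Y × Z → ℝ) : Y → S → ℝ :=
  fun y s => margSY P (s, y) / margY P y
noncomputable def condSgivenZ (P : S × Y × Z → ℝ) : Z → S → ℝ :=
  fun z s => margSZ P (s, z) / margZ P z

/-- Weighted input deficiency `δ_i^π(μ̄,κ̄) = inf_{λ̄} ∑_y π_Y(y) D(κ̄_y ∥ (μ̄∘λ̄)_y)`. -/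
noncomputable def defIn {Y' Z' S' : Type*} [Fintype Y'] [Fintype Z'] [Fintype S']
    (piY : Y' → ℝ) (mub : Z' → S' → ℝ) (kab : Y' → S' → ℝ) : ℝ :=
  sInf {d | ∃ lb : Y' → Z' → ℝ, IsChannel lb ∧
    d = ∑ y, piY y * klDiv2 (kab y) (chComp mub lb y)}

end Joint

/-!
Given `Q ∈ Δ_P` for `(S, Y, Z)`, extend it by the conditional law of `Z'` given `(S, Z)` under
`P`: `Q'(s, y, z, z') = Q(s, y, z) P(z' | s, z)`. Then `Q'` lies in `Δ_P` for `(S, Y, (Z, Z'))`,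
and since `Y − (S, Z) − Z'` is a Markov chain under `Q'`, the chain rule reads
`I_Q(S; Y | Z) = I_Q'(S; Y | Z, Z') + I_Q'(Y; Z' | Z) ≥ I_Q'(S; Y | Z, Z')`.
-/

lemma sub_div_log_two_le_mul_logb {a b : ℝ} (ha : 0 ≤ a) (hb : 0 ≤ b) (hab : b = 0 → a = 0) :
    (a - b) / log 2 ≤ a * logb 2 (a / b) := by
  rw [logb, ← mul_div_assoc]
  gcongr
  rcases ha.eq_or_lt with rfl | ha
  · simpa using hb
  · have hb : 0 < b := hb.lt_of_ne fun h => ha.ne' (hab h.symm)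
    have key := one_sub_inv_le_log_of_pos (div_pos ha hb)
    rw [inv_div] at key
    calc a - b = a * (1 - b / a) := by field_simp
      _ ≤ a * log (a / b) := by gcongr

lemma mul_logb_eq_add_of_le {q κ a b c A M : ℝ} (hq : 0 ≤ q) (hκ : 0 ≤ κ) (ha : q ≤ a)
    (hb : q ≤ b) (hc : q ≤ c) (hA : q * κ ≤ A) (hM : a * κ ≤ M) :
    q * κ * logb 2 (q * c / (a * b)) =
      q * κ * logb 2 (q * κ * M / (a * κ * A)) + q * κ * logb 2 (A * c / (b * M)) := by
  rcases hq.eq_or_lt with rfl | hq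
  · simp
  rcases hκ.eq_or_lt with rfl | hκ
  · simp
  have ha := hq.trans_le ha
  have hA := (mul_pos hq hκ).trans_le hA
  have hM := (mul_pos ha hκ).trans_le hM
  have hb := hq.trans_le hb
  have hc := hq.trans_le hc
  rw [← mul_add, ← logb_mul (by positivity) (by positivity)]
  congr 2
  field_simp

section Marginals

variable {S Y Z : Type*}

lemma le_margSZ [Fintype Y] {Q : S × Y × Z → ℝ} (hQ : ∀ p, 0 ≤ Q p) (s : S) (y : Y) (z : Z) :
    Q (s, y, z) ≤ margSZ Q (s, z) :=
  single_le_sum (f := fun y => Q (s, y, z)) (fun _ _ => hQ _) (mem_univ y)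

lemma le_margYZ [Fintype S] {Q : S × Y × Z → ℝ} (hQ : ∀ p, 0 ≤ Q p) (s : S) (y : Y) (z : Z) :
    Q (s, y, z) ≤ margYZ Q (y, z) :=
  single_le_sum (f := fun s => Q (s, y, z)) (fun _ _ => hQ _) (mem_univ s)

lemma margSZ_nonneg [Fintype Y] {Q : S × Y × Z → ℝ} (hQ : ∀ p, 0 ≤ Q p) (s : S) (z : Z) :
    0 ≤ margSZ Q (s, z) :=
  sum_nonneg fun _ _ => hQ _

lemma margYZ_nonneg [Fintype S] {Q : S × Y × Z → ℝ} (hQ : ∀ p, 0 ≤ Q p) (y : Y) (z : Z) :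
    0 ≤ margYZ Q (y, z) :=
  sum_nonneg fun _ _ => hQ _

lemma margZ_nonneg [Fintype S] [Fintype Y] {Q : S × Y × Z → ℝ} (hQ : ∀ p, 0 ≤ Q p) (z : Z) :
    0 ≤ margZ Q z :=
  sum_nonneg fun s _ => margSZ_nonneg hQ s z

lemma margSZ_le_margZ [Fintype S] [Fintype Y] {Q : S × Y × Z → ℝ} (hQ : ∀ p, 0 ≤ Q p)
    (s : S) (z : Z) : margSZ Q (s, z) ≤ margZ Q z :=
  single_le_sum (f := fun s => margSZ Q (s, z)) (fun s _ => margSZ_nonneg hQ s z) (mem_univ s)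

lemma le_margZ [Fintype S] [Fintype Y] {Q : S × Y × Z → ℝ} (hQ : ∀ p, 0 ≤ Q p)
    (s : S) (y : Y) (z : Z) : Q (s, y, z) ≤ margZ Q z :=
  (le_margSZ hQ s y z).trans (margSZ_le_margZ hQ s z)

lemma sum_margYZ [Fintype S] [Fintype Y] (Q : S × Y × Z → ℝ) (z : Z) :
    ∑ y, margYZ Q (y, z) = margZ Q z :=
  sum_comm

lemma sum_margSY [Fintype S] [Fintype Y] [Fintype Z] (Q : S × Y × Z → ℝ) :
    ∑ q, margSY Q q = ∑ p, Q p := by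
  simp only [margSY, Fintype.sum_prod_type]

end Marginals

theorem condMI_nonneg {S Y Z : Type*} [Fintype S] [Fintype Y] [Fintype Z]
    {Q : S × Y × Z → ℝ} (hQ : ∀ p, 0 ≤ Q p) : 0 ≤ condMI Q := by
  -- Gibbs' inequality for `Q` against `β = Q_SZ Q_YZ / Q_Z`, whose mass is at most that of `Q`.
  set β : S → Y → Z → ℝ := fun s y z => margSZ Q (s, z) * margYZ Q (y, z) / margZ Q z
  have hβ : ∀ s, ∑ y, ∑ z, β s y z ≤ ∑ y, ∑ z, Q (s, y, z) := by
    intro s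
    rw [sum_comm, sum_comm (f := fun y z => Q (s, y, z))]
    refine sum_le_sum fun z _ => ?_
    calc ∑ y, β s y z = margSZ Q (s, z) * (margZ Q z / margZ Q z) := by
          simp only [β, ← sum_div, ← mul_sum, sum_margYZ, mul_div_assoc]
      _ ≤ margSZ Q (s, z) := mul_le_of_le_one_right (margSZ_nonneg hQ s z) (div_self_le_one _)
  calc 0 ≤ ∑ s, ∑ y, ∑ z, (Q (s, y, z) - β s y z) / log 2 := by
        refine sum_nonneg fun s _ => ?_
        simp only [← sum_div, sum_sub_distrib]
        exact div_nonneg (sub_nonneg.2 (hβ s)) (log_nonneg one_le_two)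
    _ ≤ condMI Q := by
        unfold condMI
        gcongr with s _ y _ z _
        rw [← div_div_eq_mul_div]
        refine sub_div_log_two_le_mul_logb (hQ _) ?_ fun h => ?_
        · exact div_nonneg (mul_nonneg (margSZ_nonneg hQ s z) (margYZ_nonneg hQ y z))
            (margZ_nonneg hQ z)
        · obtain (h | h) | h := div_eq_zero_iff.1 h |>.imp_left mul_eq_zero.1
          · exact le_antisymm (h ▸ le_margSZ hQ s y z) (hQ _)
          · exact le_antisymm (h ▸ le_margYZ hQ s y z) (hQ _)
          · exact le_antisymm (h ▸ le_margZ hQ s y z) (hQ _)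

section MarkovExtension

variable {S Y Z Z' : Type*}

def markovExtension (Q : S × Y × Z → ℝ) (k : S → Z → Z' → ℝ) : S × Y × (Z × Z') → ℝ :=
  fun p => Q (p.1, p.2.1, p.2.2.1) * k p.1 p.2.2.1 p.2.2.2

/-- For `P` a law of `(S, Y, (Z, Z'))`, `condMI (margYZ'Z P)` is `I(Y; Z' | Z)`. -/
noncomputable def margYZ'Z [Fintype S] (P : S × Y × (Z × Z') → ℝ) : Y × Z' × Z → ℝ :=
  fun p => margYZ P (p.1, (p.2.2, p.2.1))

lemma markovExtension_nonneg {Q : S × Y × Z → ℝ} {k : S → Z → Z' → ℝ} (hQ : ∀ p, 0 ≤ Q p)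
    (hk : ∀ s z z', 0 ≤ k s z z') (p : S × Y × (Z × Z')) : 0 ≤ markovExtension Q k p :=
  mul_nonneg (hQ _) (hk _ _ _)

lemma mul_sum_kernel_eq_self [Fintype Y] [Fintype Z'] {Q : S × Y × Z → ℝ} {k : S → Z → Z' → ℝ}
    (hQ : ∀ p, 0 ≤ Q p) (hk : ∀ s z, margSZ Q (s, z) ≠ 0 → ∑ z', k s z z' = 1)
    (s : S) (y : Y) (z : Z) : Q (s, y, z) * ∑ z', k s z z' = Q (s, y, z) := by
  by_cases h : margSZ Q (s, z) = 0
  · rw [le_antisymm (h ▸ le_margSZ hQ s y z) (hQ _), zero_mul]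
  · rw [hk s z h, mul_one]

lemma margSY_markovExtension [Fintype Y] [Fintype Z] [Fintype Z'] {Q : S × Y × Z → ℝ}
    {k : S → Z → Z' → ℝ} (hQ : ∀ p, 0 ≤ Q p)
    (hk : ∀ s z, margSZ Q (s, z) ≠ 0 → ∑ z', k s z z' = 1) :
    margSY (markovExtension Q k) = margSY Q := by
  funext ⟨s, y⟩
  simp only [margSY, markovExtension, Fintype.sum_prod_type, ← mul_sum,
    mul_sum_kernel_eq_self hQ hk]

lemma margSZ_markovExtension [Fintype Y] (Q : S × Y × Z → ℝ) (k : S → Z → Z' → ℝ)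
    (s : S) (z : Z) (z' : Z') :
    margSZ (markovExtension Q k) (s, (z, z')) = margSZ Q (s, z) * k s z z' := by
  simp only [margSZ, markovExtension, sum_mul]

lemma margZ_margYZ'Z [Fintype S] [Fintype Y] [Fintype Z'] {Q : S × Y × Z → ℝ}
    {k : S → Z → Z' → ℝ} (hQ : ∀ p, 0 ≤ Q p)
    (hk : ∀ s z, margSZ Q (s, z) ≠ 0 → ∑ z', k s z z' = 1) (z : Z) :
    margZ (margYZ'Z (markovExtension Q k)) z = margZ Q z :=
  calc margZ (margYZ'Z (markovExtension Q k)) z = ∑ y, ∑ s, Q (s, y, z) * ∑ z', k s z z' := by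
        simp only [margZ, margYZ'Z, margYZ, markovExtension, mul_sum]
        exact sum_congr rfl fun y _ => sum_comm
    _ = margZ Q z := by
        simp only [mul_sum_kernel_eq_self hQ hk]
        exact sum_comm

lemma margSZ_margYZ'Z [Fintype S] [Fintype Y] [Fintype Z'] {Q : S × Y × Z → ℝ}
    {k : S → Z → Z' → ℝ} (hQ : ∀ p, 0 ≤ Q p)
    (hk : ∀ s z, margSZ Q (s, z) ≠ 0 → ∑ z', k s z z' = 1) (y : Y) (z : Z) :
    margSZ (margYZ'Z (markovExtension Q k)) (y, z) = margYZ Q (y, z) := by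
  simp only [margSZ, margYZ'Z, margYZ, markovExtension]
  rw [sum_comm]
  simp only [← mul_sum, mul_sum_kernel_eq_self hQ hk]

lemma margYZ_margYZ'Z [Fintype S] [Fintype Y] (P : S × Y × (Z × Z') → ℝ) (z : Z) (z' : Z') :
    margYZ (margYZ'Z P) (z', z) = margZ P (z, z') :=
  sum_margYZ P (z, z')

theorem condMI_eq_condMI_markovExtension_add [Fintype S] [Fintype Y] [Fintype Z] [Fintype Z']
    {Q : S × Y × Z → ℝ} {k : S → Z → Z' → ℝ} (hQ : ∀ p, 0 ≤ Q p) (hk₀ : ∀ s z z', 0 ≤ k s z z')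
    (hk : ∀ s z, margSZ Q (s, z) ≠ 0 → ∑ z', k s z z' = 1) :
    condMI Q = condMI (markovExtension Q k) + condMI (margYZ'Z (markovExtension Q k)) := by
  set A : Y → Z → Z' → ℝ := fun y z z' => margYZ (markovExtension Q k) (y, (z, z'))
  set M : Z → Z' → ℝ := fun z z' => margZ (markovExtension Q k) (z, z')
  have hQ_exp : condMI Q = ∑ s, ∑ y, ∑ z, ∑ z', Q (s, y, z) * k s z z' *
      logb 2 (Q (s, y, z) * margZ Q z / (margSZ Q (s, z) * margYZ Q (y, z))) := by
    unfold condMI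
    refine sum_congr rfl fun s _ => sum_congr rfl fun y _ => sum_congr rfl fun z _ => ?_
    rw [← sum_mul, ← mul_sum, mul_sum_kernel_eq_self hQ hk]
  have hQ'_exp : condMI (markovExtension Q k) = ∑ s, ∑ y, ∑ z, ∑ z', Q (s, y, z) * k s z z' *
      logb 2 (Q (s, y, z) * k s z z' * M z z' / (margSZ Q (s, z) * k s z z' * A y z z')) := by
    unfold condMI
    simp only [Fintype.sum_prod_type, margSZ_markovExtension]
    rfl
  have hR_exp : condMI (margYZ'Z (markovExtension Q k)) =
      ∑ s, ∑ y, ∑ z, ∑ z', Q (s, y, z) * k s z z' *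
        logb 2 (A y z z' * margZ Q z / (margYZ Q (y, z) * M z z')) := by
    calc condMI (margYZ'Z (markovExtension Q k))
        = ∑ y, ∑ z', ∑ z, ∑ s, Q (s, y, z) * k s z z' *
            logb 2 (A y z z' * margZ Q z / (margYZ Q (y, z) * M z z')) := by
          refine sum_congr rfl fun y _ => sum_congr rfl fun z' _ => sum_congr rfl fun z _ => ?_
          rw [margZ_margYZ'Z hQ hk, margSZ_margYZ'Z hQ hk, margYZ_margYZ'Z]
          exact sum_mul ..
      _ = _ := (sum_congr rfl fun y _ =>
          sum_comm_cycle.trans (sum_congr rfl fun s _ => sum_comm)).trans sum_comm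
  have hQ' := markovExtension_nonneg hQ hk₀
  rw [hQ_exp, hQ'_exp, hR_exp]
  simp only [← sum_add_distrib]
  refine sum_congr rfl fun s _ => sum_congr rfl fun y _ => sum_congr rfl fun z _ =>
    sum_congr rfl fun z' _ => ?_
  refine mul_logb_eq_add_of_le (hQ _) (hk₀ s z z') (le_margSZ hQ s y z) (le_margYZ hQ s y z)
    (le_margZ hQ s y z) (le_margYZ hQ' s y (z, z')) ?_
  rw [← margSZ_markovExtension]
  exact margSZ_le_margZ hQ' s (z, z')

theorem condMI_markovExtension_le [Fintype S] [Fintype Y] [Fintype Z] [Fintype Z']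
    {Q : S × Y × Z → ℝ} {k : S → Z → Z' → ℝ} (hQ : ∀ p, 0 ≤ Q p) (hk₀ : ∀ s z z', 0 ≤ k s z z')
    (hk : ∀ s z, margSZ Q (s, z) ≠ 0 → ∑ z', k s z z' = 1) :
    condMI (markovExtension Q k) ≤ condMI Q := by
  rw [condMI_eq_condMI_markovExtension_add hQ hk₀ hk]
  exact le_add_of_nonneg_right
    (condMI_nonneg fun _ => sum_nonneg fun _ _ => markovExtension_nonneg hQ hk₀ _)

end MarkovExtension

section UniqueInformation

variable {S Y Z Z' : Type*}

lemma self_mem_marginalPolytope [Fintype S] [Fintype Y] [Fintype Z] {P : S × Y × Z → ℝ}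
    (hP : IsDist P) : P ∈ marginalPolytope P :=
  ⟨hP, rfl, rfl⟩

lemma UI_le_condMI [Fintype S] [Fintype Y] [Fintype Z] {P Q : S × Y × Z → ℝ}
    (hQ : Q ∈ marginalPolytope P) : UI P ≤ condMI Q :=
  csInf_le ⟨0, by rintro _ ⟨Q, hQ, rfl⟩; exact condMI_nonneg hQ.1.1⟩ ⟨Q, hQ, rfl⟩

noncomputable def margSYZ [Fintype Z'] (P : S × Y × (Z × Z') → ℝ) : S × Y × Z → ℝ :=
  fun p => ∑ z', P (p.1, p.2.1, (p.2.2, z'))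

/-- `P(z' | s, z)`, set to zero where `(s, z)` is null. -/
noncomputable def condZ'givenSZ [Fintype Y] [Fintype Z'] (P : S × Y × (Z × Z') → ℝ) :
    S → Z → Z' → ℝ :=
  fun s z z' => margSZ P (s, (z, z')) / margSZ (margSYZ P) (s, z)

lemma margSZ_margSYZ [Fintype Y] [Fintype Z'] (P : S × Y × (Z × Z') → ℝ) (s : S) (z : Z) :
    margSZ (margSYZ P) (s, z) = ∑ z', margSZ P (s, (z, z')) :=
  sum_comm

lemma margSY_margSYZ [Fintype Z] [Fintype Z'] (P : S × Y × (Z × Z') → ℝ) :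
    margSY (margSYZ P) = margSY P := by
  funext ⟨s, y⟩
  simp only [margSY, margSYZ, Fintype.sum_prod_type]

lemma isDist_margSYZ [Fintype S] [Fintype Y] [Fintype Z] [Fintype Z']
    {P : S × Y × (Z × Z') → ℝ} (hP : IsDist P) : IsDist (margSYZ P) :=
  ⟨fun _ => sum_nonneg fun _ _ => hP.1 _,
    by rw [← sum_margSY, margSY_margSYZ, sum_margSY, hP.2]⟩

lemma condZ'givenSZ_nonneg [Fintype Y] [Fintype Z'] {P : S × Y × (Z × Z') → ℝ}
    (hP : ∀ p, 0 ≤ P p) (s : S) (z : Z) (z' : Z') : 0 ≤ condZ'givenSZ P s z z' :=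
  div_nonneg (sum_nonneg fun _ _ => hP _) (sum_nonneg fun _ _ => sum_nonneg fun _ _ => hP _)

lemma margSZ_mul_condZ'givenSZ [Fintype Y] [Fintype Z'] {P : S × Y × (Z × Z') → ℝ}
    (hP : ∀ p, 0 ≤ P p) (s : S) (z : Z) (z' : Z') :
    margSZ (margSYZ P) (s, z) * condZ'givenSZ P s z z' = margSZ P (s, (z, z')) := by
  by_cases h : margSZ (margSYZ P) (s, z) = 0
  · rw [margSZ_margSYZ] at h
    rw [margSZ_margSYZ, h, zero_mul, eq_comm]
    exact (sum_eq_zero_iff_of_nonneg fun w _ => sum_nonneg fun _ _ => hP _).1 h z' (mem_univ _)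
  · exact mul_div_cancel₀ _ h

lemma sum_condZ'givenSZ_of_mem [Fintype S] [Fintype Y] [Fintype Z] [Fintype Z']
    {P : S × Y × (Z × Z') → ℝ} {Q : S × Y × Z → ℝ} (hQ : Q ∈ marginalPolytope (margSYZ P))
    (s : S) (z : Z) (h : margSZ Q (s, z) ≠ 0) : ∑ z', condZ'givenSZ P s z z' = 1 := by
  rw [hQ.2.2] at h
  simp only [condZ'givenSZ, ← sum_div, ← margSZ_margSYZ, div_self h]

lemma markovExtension_mem_marginalPolytope [Fintype S] [Fintype Y] [Fintype Z] [Fintype Z']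
    {P : S × Y × (Z × Z') → ℝ} (hP : ∀ p, 0 ≤ P p) {Q : S × Y × Z → ℝ}
    (hQ : Q ∈ marginalPolytope (margSYZ P)) :
    markovExtension Q (condZ'givenSZ P) ∈ marginalPolytope P := by
  have hSY' := margSY_markovExtension hQ.1.1 (sum_condZ'givenSZ_of_mem hQ)
  obtain ⟨⟨hQ₀, hQ₁⟩, hSY, hSZ⟩ := hQ
  refine ⟨⟨markovExtension_nonneg hQ₀ (condZ'givenSZ_nonneg hP), ?_⟩, ?_, ?_⟩
  · rw [← sum_margSY, hSY', sum_margSY, hQ₁]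
  · rw [hSY', hSY, margSY_margSYZ]
  · funext ⟨s, z, z'⟩
    rw [margSZ_markovExtension, hSZ, margSZ_mul_condZ'givenSZ hP]

end UniqueInformation

/-- monotonicity of `UI` under adversarial side information:
`UI(S;Y\(Z,Z')) ≤ UI(S;Y\Z)`. -/
theorem UI_mono_side_information
    {S Y Z Z' : Type*} [Fintype S] [Fintype Y] [Fintype Z] [Fintype Z']
    (P : S × Y × (Z × Z') → ℝ) (hP : IsDist P) :
    UI P ≤ UI (fun p : S × Y × Z => ∑ z' : Z', P (p.1, p.2.1, (p.2.2, z'))) := by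
  change UI P ≤ UI (margSYZ P)
  refine le_csInf ⟨_, margSYZ P, self_mem_marginalPolytope (isDist_margSYZ hP), rfl⟩ ?_
  rintro _ ⟨Q, hQ, rfl⟩
  calc UI P ≤ condMI (markovExtension Q (condZ'givenSZ P)) :=
        UI_le_condMI (markovExtension_mem_marginalPolytope hP.1 hQ)
    _ ≤ condMI Q := condMI_markovExtension_le hQ.1.1 (condZ'givenSZ_nonneg hP.1)
        (sum_condZ'givenSZ_of_mem hQ)
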